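/- arXiv:2312.09976 — 2 statements merged into one kernel-verified Lean document; each statement's English description precedes it below -/
import Mathlib

section
/- Let G be an n-vertex k-graph with a μ₀-normal perfect fractional matching x₀, whose edges are red/blue-coloured, and let L₁,…,L_m be m = ηn^k pairwise edge-disjoint near-alternating k-grids in G. Define x by increasing x₀ by μ₀n^{-k+1}/2 on every horizontal edge of each L_i, decreasing x₀ by μ₀n^{-k+1}/2 on every vertical edge of each L_i, and leaving x₀ unchanged elsewhere. Then x is a perfect fractional matching, x is μ-normal for any μ with 2μ ≤ μ₀, and if the total x₀-weight of red edges is at least W then the total x-weight of red edges is at least W + ηn^k·μ₀n^{-k+1}/2. -/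
set_option maxHeartbeats 1600000

open Finset

lemma aux_fiber {α β : Type*} [Fintype α] [DecidableEq β] (f : α → β) (F : Finset β) :
    ∑ e ∈ F, (Finset.univ.filter fun p => f p = e).card
      = (Finset.univ.filter fun p => f p ∈ F).card := by
  classical
  simp only [Finset.card_filter]
  rw [Finset.sum_comm]
  refine Finset.sum_congr rfl fun p _ => ?_
  simp [Finset.sum_ite_eq]

lemma aux_prod {m k : ℕ} (P : Fin m × Fin k → Prop) [DecidablePred P] :
    (Finset.univ.filter P).card = ∑ i : Fin m, (Finset.univ.filter fun a : Fin k => P (i, a)).card := by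
  simp only [Finset.card_filter]
  rw [Fintype.sum_prod_type]

lemma aux_H {n k m : ℕ} (g : Fin m → (Fin k × Fin k ↪ Fin n)) (v : Fin n) :
    (Finset.univ.filter fun p : Fin m × Fin k =>
        v ∈ Finset.image (fun j => g p.1 (p.2, j)) Finset.univ).card
      = (Finset.univ.filter fun q : Fin m × (Fin k × Fin k) => g q.1 q.2 = v).card := by
  symm
  refine Finset.card_bij (fun q _ => (q.1, q.2.1)) ?_ ?_ ?_
  · intro q hq
    simp only [Finset.mem_filter, Finset.mem_univ, true_and] at hq ⊢
    rw [Finset.mem_image]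
    exact ⟨q.2.2, Finset.mem_univ _, hq⟩
  · intro q hq q' hq' h
    simp only [Finset.mem_filter, Finset.mem_univ, true_and] at hq hq'
    have heq : (q.1, q.2.1) = (q'.1, q'.2.1) := h
    have h1 : q.1 = q'.1 := (Prod.ext_iff.mp heq).1
    have h2 : g q.1 q.2 = g q.1 q'.2 := by rw [hq, h1, hq']
    exact Prod.ext h1 ((g q.1).injective h2)
  · intro p hp
    simp only [Finset.mem_filter, Finset.mem_univ, true_and, Finset.mem_image] at hp
    obtain ⟨j, hj⟩ := hp
    exact ⟨(p.1, (p.2, j)), by simp [hj], rfl⟩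

lemma aux_V {n k m : ℕ} (g : Fin m → (Fin k × Fin k ↪ Fin n)) (v : Fin n) :
    (Finset.univ.filter fun p : Fin m × Fin k =>
        v ∈ Finset.image (fun i' => g p.1 (i', p.2)) Finset.univ).card
      = (Finset.univ.filter fun q : Fin m × (Fin k × Fin k) => g q.1 q.2 = v).card := by
  symm
  refine Finset.card_bij (fun q _ => (q.1, q.2.2)) ?_ ?_ ?_
  · intro q hq
    simp only [Finset.mem_filter, Finset.mem_univ, true_and] at hq ⊢
    rw [Finset.mem_image]
    exact ⟨q.2.1, Finset.mem_univ _, hq⟩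
  · intro q hq q' hq' h
    simp only [Finset.mem_filter, Finset.mem_univ, true_and] at hq hq'
    have heq : (q.1, q.2.2) = (q'.1, q'.2.2) := h
    have h1 : q.1 = q'.1 := (Prod.ext_iff.mp heq).1
    have h2 : g q.1 q.2 = g q.1 q'.2 := by rw [hq, h1, hq']
    exact Prod.ext h1 ((g q.1).injective h2)
  · intro p hp
    simp only [Finset.mem_filter, Finset.mem_univ, true_and, Finset.mem_image] at hp
    obtain ⟨j, hj⟩ := hp
    exact ⟨(p.1, (j, p.2)), by simp [hj], rfl⟩



/-- Let `G` be an `n`-vertex `k`-graph (`k ≥ 3`) with a `μ₀`-normal perfect fractional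
matching `x₀`, whose edges are red/blue-coloured (`true` = red), and let
`g 0, …, g (m-1)` be `m` pairwise edge-disjoint near-alternating `k`-grids in `G`.
Define `x` by increasing `x₀` by `μ₀n^{-k+1}/2` on every horizontal edge of each grid,
decreasing it by `μ₀n^{-k+1}/2` on every vertical edge, and leaving it unchanged
elsewhere. Then `x` is a perfect fractional matching, `x` is `μ`-normal for any `μ`
with `2μ ≤ μ₀`, and if the total `x₀`-weight of the red edges is at least `W`, then
the total `x`-weight of the red edges is at least `W + m·μ₀n^{-k+1}/2`. -/
theorem perturbed_pfm_discrepancy (n k m : ℕ) (hk : 3 ≤ k) (μ₀ μ : ℝ)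
    (hμ₀ : 0 < μ₀) (hμ₀1 : μ₀ ≤ 1) (hμ : 0 < μ) (hμμ₀ : 2 * μ ≤ μ₀)
    (E : Finset (Finset (Fin n))) (hcard : ∀ e ∈ E, e.card = k)
    (x₀ : Finset (Fin n) → ℝ)
    (hpfm : ∀ v : Fin n, ∑ e ∈ E.filter (fun e => v ∈ e), x₀ e = 1)
    (hx₀ : ∀ e ∈ E, 0 ≤ x₀ e)
    (hnormal : ∀ e ∈ E, μ₀ * ((n : ℝ) ^ (k - 1))⁻¹ ≤ x₀ e ∧
        x₀ e ≤ μ₀⁻¹ * ((n : ℝ) ^ (k - 1))⁻¹)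
    (c : Finset (Fin n) → Bool)
    (g : Fin m → (Fin k × Fin k ↪ Fin n))
    (hedges : ∀ (i : Fin m) (a : Fin k),
        Finset.image (fun j => g i (a, j)) Finset.univ ∈ E ∧
        Finset.image (fun b => g i (b, a)) Finset.univ ∈ E)
    (hdisj : Function.Injective (fun p : Fin m × (Fin k ⊕ Fin k) =>
        Sum.elim (fun a => Finset.image (fun j => g p.1 (a, j)) Finset.univ)
                 (fun b => Finset.image (fun i' => g p.1 (i', b)) Finset.univ) p.2))
    (hred : ∀ i : Fin m, k - 1 ≤ (Finset.univ.filter fun a : Fin k =>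
        c (Finset.image (fun j => g i (a, j)) Finset.univ) = true).card)
    (hblue : ∀ i : Fin m, k - 1 ≤ (Finset.univ.filter fun b : Fin k =>
        c (Finset.image (fun i' => g i (i', b)) Finset.univ) = false).card)
    (x : Finset (Fin n) → ℝ)
    (hx : ∀ e : Finset (Fin n), x e = x₀ e
        + μ₀ * ((n : ℝ) ^ (k - 1))⁻¹ / 2 *
            ((Finset.univ.filter fun p : Fin m × Fin k =>
              Finset.image (fun j => g p.1 (p.2, j)) Finset.univ = e).card)
        - μ₀ * ((n : ℝ) ^ (k - 1))⁻¹ / 2 *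
            ((Finset.univ.filter fun p : Fin m × Fin k =>
              Finset.image (fun i' => g p.1 (i', p.2)) Finset.univ = e).card))
    (W : ℝ)
    (hW : W ≤ ∑ e ∈ E.filter (fun e => c e = true), x₀ e) :
    (∀ v : Fin n, ∑ e ∈ E.filter (fun e => v ∈ e), x e = 1) ∧
    (∀ e ∈ E, μ * ((n : ℝ) ^ (k - 1))⁻¹ ≤ x e ∧
        x e ≤ μ⁻¹ * ((n : ℝ) ^ (k - 1))⁻¹) ∧
    W + m * (μ₀ * ((n : ℝ) ^ (k - 1))⁻¹ / 2) ≤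
      ∑ e ∈ E.filter (fun e => c e = true), x e := by
  set q : ℝ := ((n : ℝ) ^ (k - 1))⁻¹ with hqdef
  set δ : ℝ := μ₀ * q / 2 with hδdef
  have hq0 : 0 ≤ q := by rw [hqdef]; positivity
  have hδ0 : 0 ≤ δ := by rw [hδdef, hqdef]; positivity
  -- injectivity of horizontal edges
  have hHinj : ∀ p p' : Fin m × Fin k,
      Finset.image (fun j => g p.1 (p.2, j)) Finset.univ
        = Finset.image (fun j => g p'.1 (p'.2, j)) Finset.univ → p = p' := by
    intro p p' h
    have h2 : ((p.1, Sum.inl p.2) : Fin m × (Fin k ⊕ Fin k)) = (p'.1, Sum.inl p'.2) :=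
      @hdisj (p.1, Sum.inl p.2) (p'.1, Sum.inl p'.2) h
    obtain ⟨h4, h5⟩ := Prod.ext_iff.mp h2
    exact Prod.ext h4 (Sum.inl.inj h5)
  have hVinj : ∀ p p' : Fin m × Fin k,
      Finset.image (fun i' => g p.1 (i', p.2)) Finset.univ
        = Finset.image (fun i' => g p'.1 (i', p'.2)) Finset.univ → p = p' := by
    intro p p' h
    have h2 : ((p.1, Sum.inr p.2) : Fin m × (Fin k ⊕ Fin k)) = (p'.1, Sum.inr p'.2) :=
      @hdisj (p.1, Sum.inr p.2) (p'.1, Sum.inr p'.2) h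
    obtain ⟨h4, h5⟩ := Prod.ext_iff.mp h2
    exact Prod.ext h4 (Sum.inr.inj h5)
  -- decomposition of the x-sum over any edge family
  have key : ∀ F : Finset (Finset (Fin n)),
      ∑ e ∈ F, x e = (∑ e ∈ F, x₀ e)
        + δ * ((Finset.univ.filter fun p : Fin m × Fin k =>
            Finset.image (fun j => g p.1 (p.2, j)) Finset.univ ∈ F).card : ℝ)
        - δ * ((Finset.univ.filter fun p : Fin m × Fin k =>
            Finset.image (fun i' => g p.1 (i', p.2)) Finset.univ ∈ F).card : ℝ) := by
    intro F
    rw [← aux_fiber (fun p : Fin m × Fin k =>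
          Finset.image (fun j => g p.1 (p.2, j)) Finset.univ) F,
        ← aux_fiber (fun p : Fin m × Fin k =>
          Finset.image (fun i' => g p.1 (i', p.2)) Finset.univ) F]
    push_cast
    rw [Finset.mul_sum, Finset.mul_sum, ← Finset.sum_add_distrib, ← Finset.sum_sub_distrib]
    exact Finset.sum_congr rfl fun e _ => by rw [hx e]
  refine ⟨?_, ?_, ?_⟩
  · -- perfect fractional matching
    intro v
    rw [key]
    have h1 : (Finset.univ.filter fun p : Fin m × Fin k =>
        Finset.image (fun j => g p.1 (p.2, j)) Finset.univ ∈ E.filter (fun e => v ∈ e))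
        = Finset.univ.filter fun p : Fin m × Fin k =>
          v ∈ Finset.image (fun j => g p.1 (p.2, j)) Finset.univ := by
      refine Finset.filter_congr fun p _ => ?_
      simp [Finset.mem_filter, (hedges p.1 p.2).1]
    have h2 : (Finset.univ.filter fun p : Fin m × Fin k =>
        Finset.image (fun i' => g p.1 (i', p.2)) Finset.univ ∈ E.filter (fun e => v ∈ e))
        = Finset.univ.filter fun p : Fin m × Fin k =>
          v ∈ Finset.image (fun i' => g p.1 (i', p.2)) Finset.univ := by
      refine Finset.filter_congr fun p _ => ?_
      simp [Finset.mem_filter, (hedges p.1 p.2).2]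
    rw [h1, h2, aux_H g v, aux_V g v, hpfm v]
    ring
  · -- normality
    intro e he
    have hA : (Finset.univ.filter fun p : Fin m × Fin k =>
        Finset.image (fun j => g p.1 (p.2, j)) Finset.univ = e).card ≤ 1 :=
      Finset.card_le_one.mpr fun a ha b hb => hHinj a b (by
        rw [(Finset.mem_filter.mp ha).2, (Finset.mem_filter.mp hb).2])
    have hB : (Finset.univ.filter fun p : Fin m × Fin k =>
        Finset.image (fun i' => g p.1 (i', p.2)) Finset.univ = e).card ≤ 1 :=
      Finset.card_le_one.mpr fun a ha b hb => hVinj a b (by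
        rw [(Finset.mem_filter.mp ha).2, (Finset.mem_filter.mp hb).2])
    have hxe := hx e
    obtain ⟨hlo, hhi⟩ := hnormal e he
    set A : ℝ := ((Finset.univ.filter fun p : Fin m × Fin k =>
        Finset.image (fun j => g p.1 (p.2, j)) Finset.univ = e).card : ℝ) with hAdef
    set B : ℝ := ((Finset.univ.filter fun p : Fin m × Fin k =>
        Finset.image (fun i' => g p.1 (i', p.2)) Finset.univ = e).card : ℝ) with hBdef
    have hAr1 : A ≤ 1 := by rw [hAdef]; exact_mod_cast hA
    have hBr1 : B ≤ 1 := by rw [hBdef]; exact_mod_cast hB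
    have hAr0 : (0:ℝ) ≤ A := by rw [hAdef]; exact Nat.cast_nonneg _
    have hBr0 : (0:ℝ) ≤ B := by rw [hBdef]; exact Nat.cast_nonneg _
    have hδB : δ * B ≤ δ := mul_le_of_le_one_right hδ0 hBr1
    have hδA : δ * A ≤ δ := mul_le_of_le_one_right hδ0 hAr1
    have hδA0 : 0 ≤ δ * A := mul_nonneg hδ0 hAr0
    have hδB0 : 0 ≤ δ * B := mul_nonneg hδ0 hBr0
    constructor
    · have h2μq : (2 * μ) * q ≤ μ₀ * q := mul_le_mul_of_nonneg_right hμμ₀ hq0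
      linarith [hxe, hlo, hδB, hδA0, hδdef, h2μq]
    · have h3 : (0:ℝ) < μ⁻¹ := inv_pos.mpr hμ
      have h4 : (0:ℝ) < μ₀⁻¹ := inv_pos.mpr hμ₀
      have h1 : μ₀ * μ₀⁻¹ = 1 := mul_inv_cancel₀ hμ₀.ne'
      have h2 : μ * μ⁻¹ = 1 := mul_inv_cancel₀ hμ.ne'
      have h5 : 1 ≤ μ₀⁻¹ := by
        nlinarith [mul_nonneg h4.le (by linarith : (0:ℝ) ≤ 1 - μ₀)]
      have hstep1 : 2 ≤ μ⁻¹ * μ₀ := by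
        nlinarith [mul_nonneg h3.le (by linarith : (0:ℝ) ≤ μ₀ - 2 * μ)]
      have hstep2 : 2 * μ₀⁻¹ ≤ μ⁻¹ := by
        nlinarith [mul_nonneg h4.le (by linarith : (0:ℝ) ≤ μ⁻¹ * μ₀ - 2)]
      have hkey : μ₀⁻¹ + μ₀ / 2 ≤ μ⁻¹ := by linarith
      have hmul : (μ₀⁻¹ + μ₀ / 2) * q ≤ μ⁻¹ * q := mul_le_mul_of_nonneg_right hkey hq0
      linarith [hxe, hhi, hδA, hδB0, hδdef, hmul]
  · -- red weight increases
    have hR := key (E.filter fun e => c e = true)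
    have hc1 : (Finset.univ.filter fun p : Fin m × Fin k =>
        Finset.image (fun j => g p.1 (p.2, j)) Finset.univ ∈ E.filter (fun e => c e = true))
        = Finset.univ.filter fun p : Fin m × Fin k =>
          c (Finset.image (fun j => g p.1 (p.2, j)) Finset.univ) = true := by
      refine Finset.filter_congr fun p _ => ?_
      simp [Finset.mem_filter, (hedges p.1 p.2).1]
    have hc2 : (Finset.univ.filter fun p : Fin m × Fin k =>
        Finset.image (fun i' => g p.1 (i', p.2)) Finset.univ ∈ E.filter (fun e => c e = true))
        = Finset.univ.filter fun p : Fin m × Fin k =>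
          c (Finset.image (fun i' => g p.1 (i', p.2)) Finset.univ) = true := by
      refine Finset.filter_congr fun p _ => ?_
      simp [Finset.mem_filter, (hedges p.1 p.2).2]
    rw [hc1, hc2] at hR
    have hNH : 2 * m ≤ (Finset.univ.filter fun p : Fin m × Fin k =>
        c (Finset.image (fun j => g p.1 (p.2, j)) Finset.univ) = true).card := by
      rw [aux_prod]
      calc 2 * m = ∑ _i : Fin m, 2 := by simp [Finset.sum_const, Finset.card_univ, mul_comm]
        _ ≤ _ := Finset.sum_le_sum fun i _ => le_trans (by omega) (hred i)
    have hNV : (Finset.univ.filter fun p : Fin m × Fin k =>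
        c (Finset.image (fun i' => g p.1 (i', p.2)) Finset.univ) = true).card ≤ m := by
      rw [aux_prod]
      calc _ ≤ ∑ _i : Fin m, 1 := by
            refine Finset.sum_le_sum fun i _ => ?_
            show (Finset.univ.filter fun b : Fin k =>
              c (Finset.image (fun i' => g i (i', b)) Finset.univ) = true).card ≤ 1
            have hsplit := Finset.card_filter_add_card_filter_not
              (s := (Finset.univ : Finset (Fin k)))
              (p := fun b => c (Finset.image (fun i' => g i (i', b)) Finset.univ) = true)
            have hneg : (Finset.univ.filter fun b : Fin k =>
                ¬ (c (Finset.image (fun i' => g i (i', b)) Finset.univ) = true)).card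
                = (Finset.univ.filter fun b : Fin k =>
                  c (Finset.image (fun i' => g i (i', b)) Finset.univ) = false).card := by
              simp only [Bool.not_eq_true]
            have hb := hblue i
            have hcu : (Finset.univ : Finset (Fin k)).card = k := by simp
            omega
        _ = m := by simp
    rw [hR]
    obtain ⟨NH, hNHdef⟩ : ∃ z : ℝ, ((Finset.univ.filter fun p : Fin m × Fin k =>
        c (Finset.image (fun j => g p.1 (p.2, j)) Finset.univ) = true).card : ℝ) = z := ⟨_, rfl⟩
    obtain ⟨NV, hNVdef⟩ : ∃ z : ℝ, ((Finset.univ.filter fun p : Fin m × Fin k =>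
        c (Finset.image (fun i' => g p.1 (i', p.2)) Finset.univ) = true).card : ℝ) = z := ⟨_, rfl⟩
    rw [hNHdef, hNVdef]
    have hNHr : (2 * m : ℝ) ≤ NH := by
      rw [← hNHdef]
      have := Nat.cast_le (α := ℝ) |>.mpr hNH
      push_cast at this
      exact this
    have hNVr : NV ≤ (m : ℝ) := by
      rw [← hNVdef]
      exact Nat.cast_le (α := ℝ) |>.mpr hNV
    have p1 : δ * (2 * (m:ℝ)) ≤ δ * NH := mul_le_mul_of_nonneg_left hNHr hδ0
    have p2 : δ * NV ≤ δ * (m:ℝ) := mul_le_mul_of_nonneg_left hNVr hδ0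
    clear hR hc1 hc2 hNH hNV hNHdef hNVdef key hx hdisj hHinj hVinj hred hblue hedges hpfm hnormal hx₀ hcard
    linarith only [hW, p1, p2]
end

section
/- Let x be a perfect fractional matching of an n-vertex k-graph G, and consider the Markov chain Z on the state space of ordered (k-1)-tuples of distinct vertices, with transition probability from (v₁,…,v_{k-1}) to (v₂,…,v_{k-1},v) equal to x({v₁,…,v_{k-1},v})/x({v₁,…,v_{k-1}}) for v outside the tuple (and 0 otherwise). Then the distribution π(S) = x(S)/((k-1)!·n) on ordered (k-1)-tuples is stationary for Z. -/
/-- `x(S)`: the total weight of edges of `E` containing the vertex set `S`. -/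
noncomputable def setWeight {n : ℕ} (E : Finset (Finset (Fin n)))
    (x : Finset (Fin n) → ℝ) (S : Finset (Fin n)) : ℝ :=
  ∑ e ∈ E.filter (fun e => S ⊆ e), x e

/-- The underlying vertex set of an ordered `(k-1)`-tuple (here `k = m+2`). -/
def tupleSet {n m : ℕ} (S : Fin (m + 1) → Fin n) : Finset (Fin n) :=
  Finset.image S Finset.univ

/-- The stationary distribution `π(S) = x(S)/((k-1)!·n)` on ordered `(k-1)`-tuples of
distinct vertices (`k = m+2`), extended by `0` to non-injective tuples. -/
noncomputable def statDist {n m : ℕ} (E : Finset (Finset (Fin n)))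
    (x : Finset (Fin n) → ℝ) (S : Fin (m + 1) → Fin n) : ℝ :=
  if Function.Injective S then
    setWeight E x (tupleSet S) / ((Nat.factorial (m + 1) : ℝ) * n)
  else 0

/-- The transition kernel of the random walk: from the tuple `S = (v₁,…,v_{k-1})` to
`T = (v₂,…,v_{k-1},v)` with probability `x({v₁,…,v_{k-1},v})/x({v₁,…,v_{k-1}})` for
`v` outside `S`, and `0` otherwise. -/
noncomputable def transProb {n m : ℕ} (E : Finset (Finset (Fin n)))
    (x : Finset (Fin n) → ℝ) (S T : Fin (m + 1) → Fin n) : ℝ :=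
  if (∀ j : Fin m, T j.castSucc = S j.succ) ∧ T (Fin.last m) ∉ tupleSet S then
    setWeight E x (insert (T (Fin.last m)) (tupleSet S)) / setWeight E x (tupleSet S)
  else 0

lemma setWeight_nonneg {n : ℕ} {E : Finset (Finset (Fin n))}
    {x : Finset (Fin n) → ℝ} (hx : ∀ e ∈ E, 0 ≤ x e) (S : Finset (Fin n)) :
    0 ≤ setWeight E x S :=
  Finset.sum_nonneg fun e he => hx e (Finset.mem_filter.1 he).1

lemma setWeight_anti {n : ℕ} {E : Finset (Finset (Fin n))}
    {x : Finset (Fin n) → ℝ} (hx : ∀ e ∈ E, 0 ≤ x e) {A B : Finset (Fin n)}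
    (h : A ⊆ B) : setWeight E x B ≤ setWeight E x A := by
  apply Finset.sum_le_sum_of_subset_of_nonneg
  · intro e he
    rw [Finset.mem_filter] at he ⊢
    exact ⟨he.1, h.trans he.2⟩
  · intro e he _
    exact hx e (Finset.mem_filter.1 he).1

lemma key_sum {n m : ℕ} {E : Finset (Finset (Fin n))}
    (hcard : ∀ e ∈ E, e.card = m + 2) (x : Finset (Fin n) → ℝ)
    {A : Finset (Fin n)} (hA : A.card = m + 1) :
    ∑ u ∈ Aᶜ, setWeight E x (insert u A) = setWeight E x A := by
  unfold setWeight
  simp only [Finset.sum_filter]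
  rw [Finset.sum_comm]
  apply Finset.sum_congr rfl
  intro e he
  by_cases hAe : A ⊆ e
  · have h1 : ∀ u, insert u A ⊆ e ↔ u ∈ e := fun u =>
      ⟨fun h => h (Finset.mem_insert_self u A), fun h => Finset.insert_subset h hAe⟩
    simp only [h1]
    rw [Finset.sum_ite_mem, Finset.sum_const]
    have h2 : Aᶜ ∩ e = e \ A := by
      ext a; simp [Finset.mem_sdiff, and_comm]
    rw [h2, Finset.card_sdiff_of_subset hAe, hcard e he, hA, if_pos hAe]
    simp
  · rw [if_neg hAe]
    apply Finset.sum_eq_zero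
    intro u _
    rw [if_neg]
    intro h
    exact hAe ((Finset.subset_insert u A).trans h)

/-- Let `x` be a perfect fractional matching of an `n`-vertex `k`-graph (`k = m+2`).
Then the distribution `π(S) = x(S)/((k-1)!·n)` on ordered `(k-1)`-tuples of distinct
vertices is stationary for the Markov chain with the above transition kernel. -/
theorem pi_stationary (n m : ℕ) (E : Finset (Finset (Fin n)))
    (hcard : ∀ e ∈ E, e.card = m + 2)
    (x : Finset (Fin n) → ℝ) (hx : ∀ e ∈ E, 0 ≤ x e ∧ x e ≤ 1)
    (hpfm : ∀ v : Fin n, ∑ e ∈ E.filter (fun e => v ∈ e), x e = 1)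
    (T : Fin (m + 1) → Fin n) (hT : Function.Injective T) :
    ∑ S : Fin (m + 1) → Fin n, statDist E x S * transProb E x S T
      = statDist E x T := by
  have hx0 : ∀ e ∈ E, 0 ≤ x e := fun e he => (hx e he).1
  set c : ℝ := (Nat.factorial (m + 1) : ℝ) * n with hc
  set g : Fin n → (Fin (m + 1) → Fin n) :=
    fun u => Fin.cons u (fun j => T j.castSucc) with hgdef
  set A : Finset (Fin n) := tupleSet T with hA
  set B : Finset (Fin n) := Finset.image (fun j : Fin m => T j.castSucc) Finset.univ
    with hB
  have hg : Function.Injective g := by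
    intro a b h
    simpa [hgdef] using congrFun h 0
  have hBA : B ⊆ A := by
    intro a ha
    obtain ⟨j, _, rfl⟩ := Finset.mem_image.1 ha
    exact Finset.mem_image.2 ⟨j.castSucc, Finset.mem_univ _, rfl⟩
  have hlastB : T (Fin.last m) ∉ B := by
    intro h
    obtain ⟨j, _, hj⟩ := Finset.mem_image.1 h
    exact absurd (hT hj) (Fin.castSucc_lt_last j).ne
  have hAins : A = insert (T (Fin.last m)) B := by
    ext a
    simp only [hA, tupleSet, Finset.mem_image, Finset.mem_insert, hB, Finset.mem_univ,
      true_and]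
    constructor
    · rintro ⟨i, rfl⟩
      refine Fin.lastCases ?_ ?_ i
      · exact Or.inl rfl
      · intro j; exact Or.inr ⟨j, rfl⟩
    · rintro (rfl | ⟨j, rfl⟩)
      · exact ⟨Fin.last m, rfl⟩
      · exact ⟨j.castSucc, rfl⟩
  have htup : ∀ u, tupleSet (g u) = insert u B := by
    intro u
    ext a
    simp only [tupleSet, Finset.mem_image, Finset.mem_insert, hB, Finset.mem_univ,
      true_and, hgdef]
    constructor
    · rintro ⟨i, rfl⟩
      refine Fin.cases ?_ ?_ i
      · exact Or.inl rfl
      · intro j; exact Or.inr ⟨j, rfl⟩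
    · rintro (rfl | ⟨j, rfl⟩)
      · exact ⟨0, rfl⟩
      · exact ⟨j.succ, by simp⟩
  have hAcard : A.card = m + 1 := by
    rw [hA, tupleSet, Finset.card_image_of_injective _ hT, Finset.card_univ,
      Fintype.card_fin]
  -- restrict the sum to the image of g
  rw [show (Finset.univ : Finset (Fin (m+1) → Fin n)) =
      Finset.univ \ (Finset.univ.image g) ∪ Finset.univ.image g by
    simp [Finset.sdiff_union_of_subset], Finset.sum_union (Finset.sdiff_disjoint)]
  have hzero : ∑ S ∈ Finset.univ \ Finset.univ.image g,
      statDist E x S * transProb E x S T = 0 := by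
    apply Finset.sum_eq_zero
    intro S hS
    rw [Finset.mem_sdiff, Finset.mem_image] at hS
    have : transProb E x S T = 0 := by
      rw [transProb, if_neg]
      rintro ⟨h1, -⟩
      apply hS.2
      refine ⟨S 0, Finset.mem_univ _, ?_⟩
      funext i
      refine Fin.cases ?_ ?_ i
      · simp [hgdef]
      · intro j; simp [hgdef, h1 j]
    rw [this, mul_zero]
  rw [hzero, zero_add, Finset.sum_image (fun a _ b _ h => hg h)]
  have hterm : ∀ u : Fin n, statDist E x (g u) * transProb E x (g u) T =
      if u ∈ A then 0 else setWeight E x (insert u A) / c := by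
    intro u
    by_cases hu : u ∈ A
    · rw [if_pos hu]
      obtain ⟨i, -, rfl⟩ := Finset.mem_image.1 hu
      refine Fin.lastCases ?_ ?_ i
      · have : transProb E x (g (T (Fin.last m))) T = 0 := by
          rw [transProb, if_neg]
          rintro ⟨-, h2⟩
          apply h2
          rw [htup]
          exact Finset.mem_insert_self _ _
        rw [this, mul_zero]
      · intro j
        have : statDist E x (g (T j.castSucc)) = 0 := by
          rw [statDist, if_neg]
          intro hinj
          have : (0 : Fin (m+1)) = j.succ := hinj (by simp [hgdef])
          exact absurd this.symm (Fin.succ_ne_zero j)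
        rw [this, zero_mul]
    · rw [if_neg hu]
      have hinj : Function.Injective (g u) := by
        rw [hgdef]
        apply Fin.cons_injective_of_injective
        · rintro ⟨j, hj⟩
          exact hu (hBA (Finset.mem_image.2 ⟨j, Finset.mem_univ _, hj⟩))
        · exact hT.comp (Fin.castSucc_injective m)
      have hcond : (∀ j : Fin m, T j.castSucc = (g u) j.succ) ∧
          T (Fin.last m) ∉ tupleSet (g u) := by
        constructor
        · intro j; simp [hgdef]
        · rw [htup]
          simp only [Finset.mem_insert]
          rintro (h | h)
          · exact hu (h ▸ hAins ▸ Finset.mem_insert_self _ _)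
          · exact hlastB h
      have hins : insert (T (Fin.last m)) (tupleSet (g u)) = insert u A := by
        rw [htup, hAins, Finset.insert_comm]
      rw [statDist, if_pos hinj, transProb, if_pos hcond, hins, htup]
      by_cases hWB : setWeight E x (insert u B) = 0
      · have hWA : setWeight E x (insert u A) = 0 := by
          have h1 : setWeight E x (insert u A) ≤ setWeight E x (insert u B) :=
            setWeight_anti hx0 (Finset.insert_subset_insert u hBA)
          have h2 := setWeight_nonneg hx0 (insert u A)
          linarith
        rw [hWB, hWA]
        simp
      · rw [div_mul_div_comm, mul_comm c (setWeight E x (insert u B)),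
          mul_div_mul_left _ _ hWB]
  rw [Finset.sum_congr rfl (fun u _ => hterm u)]
  have hfilter : Finset.univ.filter (fun u : Fin n => ¬ u ∈ A) = Aᶜ := by
    ext a; simp
  rw [Finset.sum_ite, Finset.sum_const_zero, zero_add, hfilter, ← Finset.sum_div,
    key_sum hcard x hAcard, statDist, if_pos hT]
end
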